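/- arXiv:0903.4341 — 4 statements merged into one kernel-verified Lean document; each statement's English description precedes it below -/
import Mathlib

section
/- If every finitely presented group satisfies the classical Bass conjecture, then every group satisfies the classical Bass conjecture. -/
open scoped Classical

/-- The partial augmentation `ε_s`: the sum of the coefficients of `x : ℤG` over the
conjugacy class of `s`. -/
noncomputable def partialAug {G : Type*} [Group G] (x : MonoidAlgebra ℤ G) (s : G) : ℤ :=
  ∑ g ∈ x.coeff.support.filter (fun g => IsConj s g), x.coeff g

/-- `G` satisfies the classical Bass conjecture. -/
def SatisfiesBassConjecture (G : Type*) [Group G] : Prop :=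
  ∀ (k : ℕ), 1 ≤ k → ∀ A : Matrix (Fin k) (Fin k) (MonoidAlgebra ℤ G),
    A * A = A → ∀ s : G, s ≠ 1 → partialAug A.trace s = 0

/-- `G` is finitely presented. -/
def IsFinitelyPresented (G : Type*) [Group G] : Prop :=
  ∃ (n : ℕ) (R : Set (FreeGroup (Fin n))), R.Finite ∧
    Nonempty (G ≃* FreeGroup (Fin n) ⧸ Subgroup.normalClosure R)

/-!
An idempotent matrix `A` over `ℤG` involves only finitely many group elements, so it lifts to a
matrix `A'` over `ℤF` for a free group `F` of finite rank. The defect `A' * A' - A'` vanishes in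
`ℤG` and has finite support; imposing the finitely many relations that identify elements of this
support with the same image in `G` yields a finitely presented group `H` over which the image `B`
of `A'` is already idempotent, and `B` maps to `A`. The partial augmentation of `tr A` at `s ≠ 1`
is then a sum of partial augmentations of `tr B` at the conjugacy classes of `H` lying over that
of `s`, all of which are nontrivial.
-/

open MonoidAlgebra

section PartialAugmentation

variable {G H : Type*} [Group G] [Group H]

lemma partialAug_mapDomainRingHom (ψ : H →* G) (x : MonoidAlgebra ℤ H) (s : G) :
    partialAug (mapDomainRingHom ℤ ψ x) s
      = ∑ t ∈ x.coeff.support with IsConj s (ψ t), x.coeff t := by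
  rw [partialAug, Finset.sum_filter, Finset.sum_filter]
  exact Finsupp.sum_mapDomain_index (h := fun g c => if IsConj s g then c else 0)
    (by simp) (by intro b m₁ m₂; split <;> simp)

lemma partialAug_mapDomainRingHom_eq_zero (ψ : H →* G) {x : MonoidAlgebra ℤ H}
    (hx : ∀ t, t ≠ 1 → partialAug x t = 0) {s : G} (hs : s ≠ 1) :
    partialAug (mapDomainRingHom ℤ ψ x) s = 0 := by
  rw [partialAug_mapDomainRingHom,
    ← Finset.sum_image' (g := ConjClasses.mk) (f := fun _ => (0 : ℤ)), Finset.sum_const_zero]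
  -- the summation range is a union of conjugacy classes of `H`, all of them nontrivial
  intro t ht
  obtain ⟨-, hst⟩ := Finset.mem_filter.mp ht
  have ht1 : t ≠ 1 := by
    rintro rfl
    exact hs (by simpa using hst)
  rw [← hx t ht1, partialAug, Finset.filter_filter]
  refine Finset.sum_congr (Finset.filter_congr fun u _ => ?_) fun _ _ => rfl
  rw [ConjClasses.mk_eq_mk_iff_isConj]
  exact ⟨fun htu => ⟨hst.trans (ψ.map_isConj htu), htu.symm⟩, fun h => h.2.symm⟩

end PartialAugmentation

lemma MonoidAlgebra.exists_mapDomainRingHom_eq {R F G : Type*} [Semiring R] [Monoid F] [Monoid G]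
    (φ : F →* G) {x : MonoidAlgebra R G} (hx : ↑x.coeff.support ⊆ Set.range φ) :
    ∃ y, mapDomainRingHom R φ y = x := by
  refine ⟨mapDomain (Function.invFun φ) x, ?_⟩
  ext1
  rw [mapDomainRingHom_apply, coeff_mapDomain, coeff_mapDomain, ← Finsupp.mapDomain_comp]
  conv_rhs => rw [← Finsupp.mapDomain_id (v := x.coeff)]
  exact Finsupp.mapDomain_congr fun g hg => Function.invFun_eq (hx hg)

lemma Matrix.exists_map_mapDomainRingHom_eq {R F G m n : Type*} [Semiring R] [Monoid F]
    [Monoid G] (φ : F →* G) {A : Matrix m n (MonoidAlgebra R G)}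
    (hA : ∀ i j, ↑(A i j).coeff.support ⊆ Set.range φ) :
    ∃ A' : Matrix m n (MonoidAlgebra R F), A'.map (mapDomainRingHom R φ) = A := by
  choose A' hA' using fun i j => exists_mapDomainRingHom_eq φ (hA i j)
  exact ⟨Matrix.of A', Matrix.ext hA'⟩

lemma MonoidAlgebra.eq_zero_of_mapDomainRingHom_eq_zero {R H G : Type*} [Semiring R] [Monoid H]
    [Monoid G] {ψ : H →* G} {U : Set H} (hψ : Set.InjOn ψ U) {x : MonoidAlgebra R H}
    (hx : ↑x.coeff.support ⊆ U) (h : mapDomainRingHom R ψ x = 0) : x = 0 :=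
  coeff_injective <| Finsupp.mapDomain_injOn U hψ hx (by simp) (by simpa using congrArg coeff h)

lemma exists_freeGroup_hom_range_superset {G : Type*} [Group G] (S : Finset G) :
    ∃ (n : ℕ) (φ : FreeGroup (Fin n) →* G), ↑S ⊆ Set.range φ :=
  ⟨S.card, FreeGroup.lift fun i => (S.equivFin.symm i : G),
    fun g hg => ⟨FreeGroup.of (S.equivFin ⟨g, hg⟩), by simp⟩⟩

section FiberRelations

variable {F G : Type*} [Group F] [Group G] (φ : F →* G) (T : Set F)

def fiberRelations : Set F :=
  (fun p : F × F => p.1⁻¹ * p.2) '' {p | p.1 ∈ T ∧ p.2 ∈ T ∧ φ p.1 = φ p.2}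

lemma fiberRelations_finite (hT : T.Finite) : (fiberRelations φ T).Finite :=
  ((hT.prod hT).subset fun _ hp => ⟨hp.1, hp.2.1⟩).image _

lemma normalClosure_fiberRelations_le_ker :
    Subgroup.normalClosure (fiberRelations φ T) ≤ φ.ker := by
  refine Subgroup.normalClosure_le_normal ?_
  rintro _ ⟨⟨u, v⟩, ⟨-, -, huv⟩, rfl⟩
  simp [huv]

lemma injOn_lift_fiberRelations :
    Set.InjOn (QuotientGroup.lift _ φ (normalClosure_fiberRelations_le_ker φ T))
      (QuotientGroup.mk '' T) := by
  rintro _ ⟨u, hu, rfl⟩ _ ⟨v, hv, rfl⟩ huv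
  rw [QuotientGroup.eq]
  exact Subgroup.subset_normalClosure ⟨(u, v), ⟨hu, hv, huv⟩, rfl⟩

end FiberRelations

lemma mapDomainRingHom_mk_eq_zero {R F G : Type*} [Semiring R] [Group F] [Group G]
    (φ : F →* G) {T : Set F} {y : MonoidAlgebra R F} (hy : ↑y.coeff.support ⊆ T)
    (h : mapDomainRingHom R φ y = 0) :
    mapDomainRingHom R
      (QuotientGroup.mk' (Subgroup.normalClosure (fiberRelations φ T))) y = 0 := by
  refine eq_zero_of_mapDomainRingHom_eq_zero (injOn_lift_fiberRelations φ T) ?_ ?_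
  · intro g hg
    obtain ⟨u, hu, rfl⟩ := Finset.mem_image.mp (Finsupp.mapDomain_support hg)
    exact ⟨u, hy hu, rfl⟩
  · rwa [← RingHom.comp_apply, ← mapDomainRingHom_comp, QuotientGroup.lift_comp_mk']

theorem exists_isFinitelyPresented_idempotent_lift {R G ι : Type*} [Ring R] [Group G] [Fintype ι]
    [DecidableEq ι] {A : Matrix ι ι (MonoidAlgebra R G)} (hA : A * A = A) :
    ∃ (H : Type) (_ : Group H), IsFinitelyPresented H ∧
      ∃ (ψ : H →* G) (B : Matrix ι ι (MonoidAlgebra R H)),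
        B * B = B ∧ B.map (mapDomainRingHom R ψ) = A := by
  obtain ⟨n, φ, hφ⟩ := exists_freeGroup_hom_range_superset
    (Finset.univ.biUnion fun p : ι × ι => (A p.1 p.2).coeff.support)
  obtain ⟨A', hAA'⟩ := Matrix.exists_map_mapDomainRingHom_eq (A := A) φ fun i j g hg =>
    hφ (Finset.mem_biUnion.mpr ⟨(i, j), Finset.mem_univ _, hg⟩)
  set E := A' * A' - A' with hE
  set T : Finset (FreeGroup (Fin n)) :=
    Finset.univ.biUnion fun p : ι × ι => (E p.1 p.2).coeff.support
  set N := Subgroup.normalClosure (fiberRelations φ T)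
  refine ⟨_ ⧸ N, inferInstance, ⟨n, _, fiberRelations_finite φ T T.finite_toSet,
    ⟨MulEquiv.refl _⟩⟩, QuotientGroup.lift N φ (normalClosure_fiberRelations_le_ker φ T),
    A'.map (mapDomainRingHom R (QuotientGroup.mk' N)), ?_, ?_⟩
  · have hEφ : E.map (mapDomainRingHom R φ) = 0 := by
      rw [hE, Matrix.map_sub _ (map_sub _), Matrix.map_mul, hAA', hA, sub_self]
    rw [← Matrix.map_mul, ← sub_eq_zero, ← Matrix.map_sub _ (map_sub _), ← hE]
    exact Matrix.ext fun i j => mapDomainRingHom_mk_eq_zero φ (T := T)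
      (fun g hg => Finset.mem_biUnion.mpr ⟨(i, j), Finset.mem_univ _, hg⟩)
      (congrFun (congrFun hEφ i) j)
  · rw [Matrix.map_map, ← RingHom.coe_comp, ← mapDomainRingHom_comp,
      QuotientGroup.lift_comp_mk', hAA']

/-- If every finitely presented group satisfies the classical Bass conjecture, then every
group satisfies the classical Bass conjecture. -/
theorem satisfiesBassConjecture_of_finitelyPresented
    (h : ∀ (H : Type) [Group H], IsFinitelyPresented H → SatisfiesBassConjecture H) :
    ∀ (G : Type*) [Group G], SatisfiesBassConjecture G := by
  intro G _ k hk A hA s hs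
  obtain ⟨H, _, hH, ψ, B, hB, rfl⟩ := exists_isFinitelyPresented_idempotent_lift hA
  rw [← AddMonoidHom.map_trace]
  exact partialAug_mapDomainRingHom_eq_zero ψ (h H hH k hk B hB) hs
end

section
/- If every finitely presented group satisfies the weak Bass conjecture, then every group satisfies the weak Bass conjecture. -/
/-- `G` satisfies the weak Bass conjecture: for every `k ≥ 1` and every idempotent `k × k`
matrix `A` over `ℤG`, the Kaplansky trace of `A` (the coefficient of the identity in the
trace of `A`) equals the augmentation of the trace of `A` (the sum of all coefficients). -/
def SatisfiesWeakBassConjecture (G : Type*) [Group G] : Prop :=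
  ∀ (k : ℕ), 1 ≤ k → ∀ A : Matrix (Fin k) (Fin k) (MonoidAlgebra ℤ G),
    A * A = A → A.trace.coeff 1 = ∑ g ∈ A.trace.coeff.support, A.trace.coeff g

/-!
An idempotent matrix `A` over `ℤG` involves only finitely many elements of `G`, so it lifts to a
matrix `B` over `ℤF` for a free group `F` of finite rank, mapping to `G` by some `π`. Only finitely
many elements of `F` occur in `B² - B` and in `tr B`; adding `1`, call this finite set `T`.
Dividing `F` by the finitely many relators `u⁻¹ v` with `u, v ∈ T` and `π u = π v` gives a finitely
presented group `Q` whose map to `G` is injective on the image of `T`. Hence the image of `B` in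
`ℤQ` is already idempotent, and `ℤQ → ℤG` preserves the coefficient of `1` in its trace; the
augmentation is preserved by every group homomorphism.
-/

open Set

namespace MonoidAlgebra

variable {R M N : Type*} [Semiring R]

theorem exists_mapDomain_eq_of_support_subset_range (f : M → N) (x : MonoidAlgebra R N)
    (hx : ↑x.coeff.support ⊆ range f) : ∃ y : MonoidAlgebra R M, mapDomain f y = x := by
  have hmem : x.coeff ∈ Finsupp.supported R R (f '' univ) := by
    rwa [image_univ, Finsupp.mem_supported]
  rw [← Finsupp.lmapDomain_supported] at hmem
  obtain ⟨y, -, hy⟩ := hmem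
  exact ⟨ofCoeff y, congrArg ofCoeff hy⟩

theorem eq_zero_of_mapDomain_eq_zero {f : M → N} {x : MonoidAlgebra R M}
    (hf : InjOn f x.coeff.support) (hx : mapDomain f x = 0) : x = 0 :=
  coeff_injective <| Finsupp.mapDomain_injOn _ hf (fun _ h => h) (by simp)
    (by simpa using congrArg coeff hx)

theorem coe_support_mapDomain_subset (f : M → N) (x : MonoidAlgebra R M) :
    ↑(mapDomain f x).coeff.support ⊆ f '' ↑x.coeff.support := by
  classical
  exact_mod_cast Finsupp.mapDomain_support

end MonoidAlgebra

open MonoidAlgebra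

theorem Matrix.exists_lift_to_freeGroup {R G m : Type*} [Semiring R] [Group G] [Fintype m]
    [DecidableEq m] (A : Matrix m m (MonoidAlgebra R G)) :
    ∃ (n : ℕ) (π : FreeGroup (Fin n) →* G) (B : Matrix m m (MonoidAlgebra R (FreeGroup (Fin n)))),
      (mapDomainRingHom R π).mapMatrix B = A := by
  obtain ⟨n, σ, -, hσ⟩ := (toFinite (⋃ i, ⋃ j, ↑(A i j).coeff.support : Set G)).fin_param
  have hrange : range σ ⊆ range (FreeGroup.lift σ) := by
    rintro _ ⟨i, rfl⟩
    exact ⟨FreeGroup.of i, FreeGroup.lift_apply_of⟩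
  have hsupp (i j : m) : ↑(A i j).coeff.support ⊆ range (FreeGroup.lift σ) :=
    (hσ ▸ subset_iUnion₂ (s := fun i j => (↑(A i j).coeff.support : Set G)) i j).trans hrange
  choose B hB using fun i j =>
    exists_mapDomain_eq_of_support_subset_range (FreeGroup.lift σ) (A i j) (hsupp i j)
  exact ⟨n, FreeGroup.lift σ, Matrix.of B, Matrix.ext hB⟩

section Relators

variable {F G : Type*} [Group F] [Group G]

def relatorsOn (π : F →* G) (T : Set F) : Set F :=
  image2 (fun u v => u⁻¹ * v) T T ∩ π.ker

theorem Set.Finite.relatorsOn {T : Set F} (hT : T.Finite) (π : F →* G) : (relatorsOn π T).Finite :=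
  (hT.image2 _ hT).inter_of_left _

def liftRelatorsOn (π : F →* G) (T : Set F) : F ⧸ Subgroup.normalClosure (relatorsOn π T) →* G :=
  QuotientGroup.lift _ π (Subgroup.normalClosure_le_normal inter_subset_right)

theorem liftRelatorsOn_comp_mk' (π : F →* G) (T : Set F) :
    (liftRelatorsOn π T).comp (QuotientGroup.mk' _) = π :=
  QuotientGroup.lift_comp_mk' _ _ _

theorem injOn_liftRelatorsOn (π : F →* G) (T : Set F) :
    InjOn (liftRelatorsOn π T) (QuotientGroup.mk '' T) := by
  rintro _ ⟨u, hu, rfl⟩ _ ⟨v, hv, rfl⟩ huv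
  simp only [liftRelatorsOn, QuotientGroup.lift_mk] at huv
  refine QuotientGroup.eq.2 (Subgroup.subset_normalClosure ⟨mem_image2_of_mem hu hv, ?_⟩)
  simp [MonoidHom.mem_ker, huv]

end Relators

theorem SatisfiesWeakBassConjecture.kaplansky_eq_augmentation_of_mapMatrix {H G : Type*}
    [Group H] [Group G] (hH : SatisfiesWeakBassConjecture H) (ψ : H →* G) {k : ℕ} (hk : 1 ≤ k)
    (C : Matrix (Fin k) (Fin k) (MonoidAlgebra ℤ H)) (T : Set H) (hψ : InjOn ψ T) (h1 : 1 ∈ T)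
    (hidem : ∀ i j, ↑((C * C - C) i j).coeff.support ⊆ T) (htr : ↑C.trace.coeff.support ⊆ T)
    {A : Matrix (Fin k) (Fin k) (MonoidAlgebra ℤ G)}
    (hCA : (mapDomainRingHom ℤ ψ).mapMatrix C = A) (hA : A * A = A) :
    A.trace.coeff 1 = ∑ g ∈ A.trace.coeff.support, A.trace.coeff g := by
  have hCC : C * C = C := by
    rw [← sub_eq_zero]
    ext i j : 1
    refine eq_zero_of_mapDomain_eq_zero (hψ.mono (hidem i j)) ?_
    have : (mapDomainRingHom ℤ ψ).mapMatrix (C * C - C) = 0 := by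
      rw [map_sub, map_mul, hCA, hA, sub_self]
    exact congr_fun₂ this i j
  have htrace : A.trace = mapDomain ψ C.trace := by
    rw [← hCA]; exact (AddMonoidHom.map_trace (mapDomainRingHom ℤ ψ) C).symm
  calc A.trace.coeff 1 = C.trace.coeff 1 := by
        rw [htrace, ← map_one ψ]
        exact Finsupp.mapDomain_apply' T _ htr hψ h1
    _ = C.trace.coeff.degree := hH k hk C hCC
    _ = A.trace.coeff.degree := by rw [htrace]; exact (Finsupp.degree_mapDomain _ _).symm

/-- If every finitely presented group satisfies the weak Bass conjecture, then every group
satisfies the weak Bass conjecture. -/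
theorem satisfiesWeakBassConjecture_of_finitelyPresented
    (h : ∀ (H : Type) [Group H], IsFinitelyPresented H → SatisfiesWeakBassConjecture H) :
    ∀ (G : Type*) [Group G], SatisfiesWeakBassConjecture G := by
  intro G _ k hk A hA
  obtain ⟨n, π, B, rfl⟩ := Matrix.exists_lift_to_freeGroup A
  set T : Set (FreeGroup (Fin n)) :=
    insert 1 (↑B.trace.coeff.support ∪ ⋃ i, ⋃ j, ↑((B * B - B) i j).coeff.support)
  set N := Subgroup.normalClosure (relatorsOn π T)
  have hQ : IsFinitelyPresented (FreeGroup (Fin n) ⧸ N) :=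
    ⟨n, _, (toFinite T).relatorsOn π, ⟨MulEquiv.refl _⟩⟩
  set q := mapDomainRingHom ℤ (QuotientGroup.mk' N)
  have hπ : (mapDomainRingHom ℤ (liftRelatorsOn π T)).mapMatrix (q.mapMatrix B) =
      (mapDomainRingHom ℤ π).mapMatrix B := by
    have := congrArg (fun φ => (mapDomainRingHom ℤ φ).mapMatrix B) (liftRelatorsOn_comp_mk' π T)
    rwa [mapDomainRingHom_comp] at this
  refine (h _ hQ).kaplansky_eq_augmentation_of_mapMatrix _ hk (q.mapMatrix B)
    (QuotientGroup.mk '' T) (injOn_liftRelatorsOn π T) ⟨1, mem_insert _ _, rfl⟩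
    (fun i j => ?_) ?_ hπ hA
  · rw [← map_mul, ← map_sub]
    exact (coe_support_mapDomain_subset _ _).trans
      (image_mono fun _ hx => mem_insert_of_mem _ (.inr (mem_iUnion₂.2 ⟨i, j, hx⟩)))
  · rw [RingHom.mapMatrix_apply, ← AddMonoidHom.map_trace]
    exact (coe_support_mapDomain_subset _ _).trans
      (image_mono fun _ hx => mem_insert_of_mem _ (.inl hx))
end

section
/- Let G be a group, k ≥ 1, and A an idempotent k×k matrix over the integral group ring ℤG. Then there exist a finitely presented group H, a group homomorphism φ : H → G, and an idempotent k×k matrix B over ℤH such that applying entrywise the ring homomorphism ℤH → ℤG induced by φ (i.e. MonoidAlgebra.mapDomain φ) to B yields A. -/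
/-!
Lift `A` entrywise along a homomorphism `π : F → G` from a free group of finite rank whose
image contains the finitely many group elements occurring in `A`. The lift `A'` need not be
idempotent, but its defect `A' * A' - A'` maps to zero in `ℤG` and has finite support `T`.
Killing the finitely many relators `a⁻¹ * b` with `a, b ∈ T` and `π a = π b` merges every
fibre of `π` on `T` into one point, so the defect already vanishes over `F ⧸ N`, which is
finitely presented.
-/

namespace MonoidAlgebra

variable {R M N O : Type*} [Semiring R]

lemma exists_mapDomain_eq [Nonempty M] {f : M → N} {x : MonoidAlgebra R N}
    (hx : ↑x.coeff.support ⊆ Set.range f) : ∃ y : MonoidAlgebra R M, mapDomain f y = x := by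
  refine ⟨mapDomain (Function.invFun f) x, ?_⟩
  ext : 1
  rw [coeff_mapDomain, coeff_mapDomain, ← Finsupp.mapDomain_comp]
  refine (Finsupp.mapDomain_congr fun a ha => Function.invFun_eq (hx ha)).trans ?_
  exact Finsupp.mapDomain_id

lemma mapDomain_eq_zero_of_factorsThrough [Nonempty O] {f : M → O} {g : M → N}
    {x : MonoidAlgebra R M}
    (hfg : ∀ a ∈ x.coeff.support, ∀ b ∈ x.coeff.support, g a = g b → f a = f b)
    (hx : mapDomain g x = 0) : mapDomain f x = 0 := by
  let s := x.coeff.support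
  let h : N → O := Function.extend (fun a : s => g a) (fun a : s => f a)
    fun _ => Classical.arbitrary O
  have hfactors : Function.FactorsThrough (fun a : s => f a) (fun a : s => g a) :=
    fun a b hab => hfg a a.2 b b.2 hab
  have hf : Finsupp.mapDomain f x.coeff = Finsupp.mapDomain (h ∘ g) x.coeff :=
    Finsupp.mapDomain_congr fun a ha =>
      (hfactors.extend_apply (fun _ => Classical.arbitrary O) ⟨a, ha⟩).symm
  have hfgh : mapDomain f x = mapDomain h (mapDomain g x) := by
    ext : 1
    simp only [coeff_mapDomain, hf, Finsupp.mapDomain_comp]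
  rw [hfgh, hx, mapDomain_zero]

end MonoidAlgebra

section KernelRelations

variable {F G : Type*} [Group F] [Group G]

def kernelRelations (π : F →* G) (T : Set F) : Set F :=
  (fun p : F × F => p.1⁻¹ * p.2) '' {p ∈ T ×ˢ T | π p.1 = π p.2}

lemma Set.Finite.kernelRelations (π : F →* G) {T : Set F} (hT : T.Finite) :
    (kernelRelations π T).Finite :=
  ((hT.prod hT).subset (Set.sep_subset _ _)).image _

lemma kernelRelations_subset_ker (π : F →* G) (T : Set F) :
    kernelRelations π T ⊆ π.ker := by
  rintro _ ⟨p, ⟨_, hp⟩, rfl⟩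
  simp [MonoidHom.mem_ker, hp]

lemma inv_mul_mem_kernelRelations (π : F →* G) {T : Set F} {a b : F} (ha : a ∈ T)
    (hb : b ∈ T) (hab : π a = π b) : a⁻¹ * b ∈ kernelRelations π T :=
  ⟨(a, b), ⟨⟨ha, hb⟩, hab⟩, rfl⟩

lemma normalClosure_kernelRelations_le_ker (π : F →* G) (T : Set F) :
    Subgroup.normalClosure (kernelRelations π T) ≤ π.ker :=
  Subgroup.normalClosure_le_normal (kernelRelations_subset_ker π T)

end KernelRelations

lemma isFinitelyPresented_freeGroup_quotient {n : ℕ} {R : Set (FreeGroup (Fin n))}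
    (hR : R.Finite) : IsFinitelyPresented (FreeGroup (Fin n) ⧸ Subgroup.normalClosure R) :=
  ⟨n, R, hR, ⟨MulEquiv.refl _⟩⟩

lemma exists_freeGroup_hom_subset_range {G : Type*} [Group G] {S : Set G} (hS : S.Finite) :
    ∃ (n : ℕ) (π : FreeGroup (Fin n) →* G), S ⊆ Set.range π := by
  let e := hS.toFinset.equivFin
  refine ⟨_, FreeGroup.lift fun i => (e.symm i : G), fun g hg => ?_⟩
  exact ⟨.of (e ⟨g, hS.mem_toFinset.2 hg⟩), by simp⟩

namespace MonoidAlgebra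

variable {R F G m n : Type*}

def entrySupport [Semiring R] (X : Matrix m n (MonoidAlgebra R F)) : Set F :=
  ⋃ i, ⋃ j, ↑(X i j).coeff.support

lemma finite_entrySupport [Semiring R] [Finite m] [Finite n]
    (X : Matrix m n (MonoidAlgebra R F)) : (entrySupport X).Finite :=
  Set.finite_iUnion fun _ => Set.finite_iUnion fun _ => Finset.finite_toSet _

variable [Group F] [Group G]

lemma exists_freeGroup_matrix_lift [Semiring R] [Finite m] [Finite n]
    (A : Matrix m n (MonoidAlgebra R G)) :
    ∃ (k : ℕ) (π : FreeGroup (Fin k) →* G)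
      (A' : Matrix m n (MonoidAlgebra R (FreeGroup (Fin k)))),
      A'.map (mapDomainRingHom R π) = A := by
  obtain ⟨k, π, hπ⟩ := exists_freeGroup_hom_subset_range (finite_entrySupport A)
  have hlift : ∀ i j, ∃ y, mapDomain π y = A i j := fun i j =>
    exists_mapDomain_eq fun g hg => hπ (Set.mem_iUnion₂.2 ⟨i, j, hg⟩)
  choose A' hA' using hlift
  exact ⟨k, π, .of A', Matrix.ext hA'⟩

lemma map_mapDomain_mk_eq_zero [Semiring R] (π : F →* G) {X : Matrix m n (MonoidAlgebra R F)}
    (hX : X.map (mapDomain π) = 0) {N : Subgroup F} [N.Normal]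
    (hN : kernelRelations π (entrySupport X) ⊆ N) :
    X.map (mapDomain ((↑) : F → F ⧸ N)) = 0 := by
  ext1 i j
  refine mapDomain_eq_zero_of_factorsThrough (g := π) (fun a ha b hb hab => ?_)
    (congrFun₂ hX i j)
  have hsupp : ↑(X i j).coeff.support ⊆ entrySupport X := fun c hc =>
    Set.mem_iUnion₂.2 ⟨i, j, hc⟩
  exact QuotientGroup.eq.2 (hN (inv_mul_mem_kernelRelations π (hsupp ha) (hsupp hb) hab))

lemma isIdempotentElem_map_mk [Ring R] [Fintype n] [DecidableEq n] (π : F →* G)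
    {X : Matrix n n (MonoidAlgebra R F)} (hX : IsIdempotentElem (X.map (mapDomainRingHom R π)))
    {N : Subgroup F} [N.Normal] (hN : kernelRelations π (entrySupport (X * X - X)) ⊆ N) :
    IsIdempotentElem (X.map (mapDomainRingHom R (QuotientGroup.mk' N))) := by
  have hdefect : (X * X - X).map (mapDomain π) = 0 := by
    change (mapDomainRingHom R π).mapMatrix (X * X - X) = 0
    rw [map_sub, map_mul, sub_eq_zero]
    exact hX
  have hquot := map_mapDomain_mk_eq_zero π hdefect hN
  change (mapDomainRingHom R (QuotientGroup.mk' N)).mapMatrix (X * X - X) = 0 at hquot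
  rwa [map_sub, map_mul, sub_eq_zero] at hquot

end MonoidAlgebra

theorem exists_finitelyPresented_lift_of_idempotent_general
    (G : Type*) [Group G] (k : ℕ)
    (A : Matrix (Fin k) (Fin k) (MonoidAlgebra ℤ G)) (hA : A * A = A) :
    ∃ (H : Type) (_ : Group H), IsFinitelyPresented H ∧
      ∃ (φ : H →* G) (B : Matrix (Fin k) (Fin k) (MonoidAlgebra ℤ H)),
        B * B = B ∧ B.map (MonoidAlgebra.mapDomainRingHom ℤ φ) = A := by
  obtain ⟨n, π, A', hA'⟩ := MonoidAlgebra.exists_freeGroup_matrix_lift A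
  let N := Subgroup.normalClosure
    (kernelRelations π (MonoidAlgebra.entrySupport (A' * A' - A')))
  refine ⟨_ ⧸ N, inferInstance, isFinitelyPresented_freeGroup_quotient
      ((MonoidAlgebra.finite_entrySupport _).kernelRelations π),
    QuotientGroup.lift N π (normalClosure_kernelRelations_le_ker _ _),
    A'.map (MonoidAlgebra.mapDomainRingHom ℤ (QuotientGroup.mk' N)),
    MonoidAlgebra.isIdempotentElem_map_mk π (hA' ▸ hA) Subgroup.subset_normalClosure, ?_⟩
  rw [Matrix.map_map, ← RingHom.coe_comp, ← MonoidAlgebra.mapDomainRingHom_comp,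
    QuotientGroup.lift_comp_mk', hA']

/-- Every idempotent matrix over `ℤG` is the entrywise image of an idempotent matrix over
`ℤH` for some finitely presented group `H` mapping to `G`. -/
theorem exists_finitelyPresented_lift_of_idempotent
    (G : Type*) [Group G] (k : ℕ) (hk : 1 ≤ k)
    (A : Matrix (Fin k) (Fin k) (MonoidAlgebra ℤ G)) (hA : A * A = A) :
    ∃ (H : Type) (_ : Group H), IsFinitelyPresented H ∧
      ∃ (φ : H →* G) (B : Matrix (Fin k) (Fin k) (MonoidAlgebra ℤ H)),
        B * B = B ∧ B.map (MonoidAlgebra.mapDomainRingHom ℤ φ) = A :=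
  exists_finitelyPresented_lift_of_idempotent_general G k A hA
end

section
/- Let ι : H → G be an injective group homomorphism that admits a group homomorphism retraction ρ : G → H with ρ ∘ ι = id_H. If G satisfies the classical Bass conjecture, then H satisfies the classical Bass conjecture. -/
open scoped Classical

/-!
The ring map `ℤH → ℤG` induced by `ι` carries idempotent matrices to idempotent matrices and
commutes with traces. Since `ι` is injective and, thanks to `ρ`, also reflects conjugacy, it
preserves partial augmentations: `ε_{ι s}(ι_* x) = ε_s(x)`. So the Bass conjecture for `G`
applied at `ι s` gives it for `H` at `s`.
-/

open Function MonoidAlgebra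

theorem isConj_map_iff_of_leftInverse {M N : Type*} [Monoid M] [Monoid N] {ι : M →* N}
    {ρ : N →* M} (hρ : LeftInverse ρ ι) {a b : M} : IsConj (ι a) (ι b) ↔ IsConj a b :=
  ⟨fun h => by simpa only [hρ _] using ρ.map_isConj h, ι.map_isConj⟩

theorem partialAug_mapDomain_of_injective {H G : Type*} [Group H] [Group G] {f : H → G}
    (hf : Injective f) (x : MonoidAlgebra ℤ H) (t : G) :
    partialAug (mapDomain f x) t = ∑ h ∈ x.coeff.support with IsConj t (f h), x.coeff h := by
  have hsupp : (mapDomain f x).coeff.support = x.coeff.support.map ⟨f, hf⟩ := by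
    rw [Finset.map_eq_image]
    exact Finsupp.mapDomain_support_of_injective hf x.coeff
  rw [partialAug, hsupp, Finset.filter_map, Finset.sum_map]
  exact Finset.sum_congr rfl fun h _ => Finsupp.mapDomain_apply hf x.coeff h

theorem partialAug_mapDomain_of_leftInverse {H G : Type*} [Group H] [Group G] {ι : H →* G}
    {ρ : G →* H} (hρ : LeftInverse ρ ι) (x : MonoidAlgebra ℤ H) (s : H) :
    partialAug (mapDomain ι x) (ι s) = partialAug x s := by
  simp_rw [partialAug_mapDomain_of_injective hρ.injective, isConj_map_iff_of_leftInverse hρ,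
    partialAug]

theorem satisfiesBassConjecture_of_retract_general
    {H G : Type*} [Group H] [Group G] (ι : H →* G)
    (ρ : G →* H) (hρ : ρ.comp ι = MonoidHom.id H)
    (hG : SatisfiesBassConjecture G) : SatisfiesBassConjecture H := by
  intro k hk A hA s hs
  have hρι : LeftInverse ρ ι := DFunLike.congr_fun hρ
  have hιs : ι s ≠ 1 := (map_ne_one_iff ι hρι.injective).mpr hs
  have hB := hG k hk (A.map (mapDomainRingHom ℤ ι)) (by rw [← Matrix.map_mul, hA]) (ι s) hιs
  rwa [← AddMonoidHom.map_trace, mapDomainRingHom_apply,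
    partialAug_mapDomain_of_leftInverse hρι] at hB

/-- If `H` is a retract of `G` (via an injective homomorphism `ι : H → G` admitting a
retraction `ρ : G → H`) and `G` satisfies the classical Bass conjecture, then so does `H`. -/
theorem satisfiesBassConjecture_of_retract
    {H G : Type*} [Group H] [Group G] (ι : H →* G) (hι : Function.Injective ι)
    (ρ : G →* H) (hρ : ρ.comp ι = MonoidHom.id H)
    (hG : SatisfiesBassConjecture G) : SatisfiesBassConjecture H :=
  satisfiesBassConjecture_of_retract_general ι ρ hρ hG
end
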